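/- arXiv:1209.0084 — 5 statements merged into one kernel-verified Lean document; each statement's English description precedes it below -/
import Mathlib

section
/- Let g ∈ ℕⁿ and let 0 ⪯ a ⪯ b ⪯ g in ℤⁿ. Set K[a,b] = 𝓑_b(R(−a)). Then 𝓟_g(K[a,b]) is isomorphic, as a multigraded K-vector space, to the direct sum ⊕_{c ∈ 𝓖[a,b]} K[Z_b](−c); in particular this direct sum is a Hilbert decomposition of 𝓟_g(K[a,b]). -/
/-!  `R = K[X₁,…,Xₙ]` with the `ℤⁿ`-grading.  For `0 ⪯ a ⪯ b ⪯ g` the multigraded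
vector space `K[a,b] = 𝓑_b(R(−a))` is one-dimensional exactly in the degrees of the
interval `[a,b]`, and its positive extension `𝓟_g(K[a,b])` has degree-`d` component
`K[a,b]_{g∧d}`.  The direct sum `⊕_{c ∈ 𝓖[a,b]} K[Z_b](−c)` has, in degree `d`, one
one-dimensional summand for every `c ∈ 𝓖[a,b]` with `c ⪯ d` and `d_j = c_j` for all
`X_j ∉ Z_b`.  The statement that `𝓟_g(K[a,b])` is isomorphic to this direct sum as a
multigraded `K`-vector space (i.e. that the latter is a Hilbert decomposition of the
former) is precisely the equality of the dimensions of the two graded components in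
every degree `d ∈ ℤⁿ`. -/

/-- `𝓖[a,b] = {c ∈ [a,b] : c_j = a_j for all j with b_j = g_j}`. -/
noncomputable def Gset {n : ℕ} (g a b : Fin n → ℤ) : Finset (Fin n → ℤ) :=
  (Finset.Icc a b).filter fun c => ∀ j, b j = g j → c j = a j

/-- `Z_b = {j : b_j = g_j}`. -/
def Zset {n : ℕ} (g b : Fin n → ℤ) : Finset (Fin n) :=
  Finset.univ.filter fun j => b j = g j

/-! In a fixed degree `d`, a summand `K[Z_b](−c)` with `c ∈ 𝓖[a,b]` is nonzero only if
`c_j = a_j` for `j ∈ Z_b` and `c_j = d_j` for `j ∉ Z_b`, so at most one summand contributes.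
That candidate does contribute exactly when `g ∧ d ∈ [a,b]`, which is the condition for
`𝓟_g(K[a,b])_d = K[a,b]_{g∧d}` to be nonzero. -/

namespace Gset

variable {n : ℕ} (g a b d : Fin n → ℤ)

noncomputable def summandsAt : Finset (Fin n → ℤ) :=
  (Gset g a b).filter fun c => (∀ j, c j ≤ d j) ∧ ∀ j ∉ Zset g b, d j = c j

def candidateAt : Fin n → ℤ :=
  fun j => if b j = g j then a j else d j

variable {g a b d}

theorem mem_summandsAt {c : Fin n → ℤ} :
    c ∈ summandsAt g a b d ↔ ∀ j, a j ≤ c j ∧ c j ≤ b j ∧ (b j = g j → c j = a j) ∧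
      c j ≤ d j ∧ (b j ≠ g j → d j = c j) := by
  simp only [summandsAt, Gset, Zset, Finset.mem_filter, Finset.mem_Icc, Finset.mem_univ,
    true_and, Pi.le_def, ← forall_and]
  exact forall_congr' fun j => by tauto

theorem eq_candidateAt_of_mem_summandsAt {c : Fin n → ℤ} (hc : c ∈ summandsAt g a b d) :
    c = candidateAt g a b d := by
  funext j
  obtain ⟨-, -, hZ, -, hnZ⟩ := mem_summandsAt.1 hc j
  unfold candidateAt
  split_ifs with hj
  exacts [hZ hj, (hnZ hj).symm]

theorem candidateAt_mem_summandsAt_iff (hab : a ≤ b) (hbg : b ≤ g) :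
    candidateAt g a b d ∈ summandsAt g a b d ↔
      (∀ j, a j ≤ min (g j) (d j)) ∧ ∀ j, min (g j) (d j) ≤ b j := by
  rw [mem_summandsAt, ← forall_and]
  refine forall_congr' fun j => ?_
  have hab_j : a j ≤ b j := hab j
  have hbg_j : b j ≤ g j := hbg j
  unfold candidateAt
  split_ifs <;> omega

end Gset

theorem positiveExtension_of_interval_isHilbertDecomposition_general
    {n : ℕ} (g a b : Fin n → ℤ)
    (hab : a ≤ b) (hbg : b ≤ g) :
    ∀ d : Fin n → ℤ,
      (((Gset g a b).filter fun c =>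
          (∀ j, c j ≤ d j) ∧ ∀ j ∉ Zset g b, d j = c j).card)
        = if (∀ j, a j ≤ min (g j) (d j)) ∧ (∀ j, min (g j) (d j) ≤ b j)
          then 1 else 0 := by
  intro d
  change (Gset.summandsAt g a b d).card = _
  by_cases h : Gset.candidateAt g a b d ∈ Gset.summandsAt g a b d
  · rw [if_pos ((Gset.candidateAt_mem_summandsAt_iff hab hbg).1 h), Finset.card_eq_one]
    exact ⟨_, Finset.eq_singleton_iff_unique_mem.2
      ⟨h, fun c hc => Gset.eq_candidateAt_of_mem_summandsAt hc⟩⟩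
  · rw [if_neg (mt (Gset.candidateAt_mem_summandsAt_iff hab hbg).2 h), Finset.card_eq_zero,
      Finset.eq_empty_iff_forall_notMem]
    exact fun c hc => h (Gset.eq_candidateAt_of_mem_summandsAt hc ▸ hc)

theorem positiveExtension_of_interval_isHilbertDecomposition
    {n : ℕ} (K : Type*) [Field K] (g a b : Fin n → ℤ)
    (hg : (0 : Fin n → ℤ) ≤ g) (h0a : (0 : Fin n → ℤ) ≤ a)
    (hab : a ≤ b) (hbg : b ≤ g) :
    ∀ d : Fin n → ℤ,
      (((Gset g a b).filter fun c =>
          (∀ j, c j ≤ d j) ∧ ∀ j ∉ Zset g b, d j = c j).card)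
        = if (∀ j, a j ≤ min (g j) (d j)) ∧ (∀ j, min (g j) (d j) ≤ b j)
          then 1 else 0 :=
  positiveExtension_of_interval_isHilbertDecomposition_general g a b hab hbg
end

section
/- Let M be a finitely generated ℤⁿ-graded R-module that is positively g-determined, and let 𝔓 : H_M(X)_{⪯g} = Σ_{i=1}^r Q[aⁱ,bⁱ](X) be a Hilbert partition of H_M(X)_{⪯g}. Then M ≅ ⊕_{i=1}^r ( ⊕_{c ∈ 𝓖[aⁱ,bⁱ]} K[Z_{bⁱ}](−c) ) as multigraded K-vector spaces; that is, the family (K[Z_{bⁱ}], c)_{1≤i≤r, c ∈ 𝓖[aⁱ,bⁱ]} is a Hilbert decomposition 𝔇(𝔓) of M. -/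
open MvPolynomial

/-!  Setting: `R = K[X₁,…,Xₙ]` with the `ℤⁿ`-grading `deg Xᵢ = eᵢ`.  A multigraded
`R`-module is a module `M` over `MvPolynomial (Fin n) K` together with a family
`gr : (Fin n → ℤ) → Submodule K M` of `K`-subspaces forming a direct sum
decomposition of `M` (the class `DirectSum.Decomposition gr`) which is compatible
with the `R`-action (`GradedSMul gr`). -/

variable {K : Type*} [Field K] {n : ℕ} {M : Type*} [AddCommGroup M] [Module K M]
  [Module (MvPolynomial (Fin n) K) M] [IsScalarTower K (MvPolynomial (Fin n) K) M]

/-- The grading is compatible with the `R`-module structure: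
multiplication by `Xᵢ` maps `M_a` into `M_{a+eᵢ}`. -/
def GradedSMul (gr : (Fin n → ℤ) → Submodule K M) : Prop :=
  ∀ (i : Fin n) (a : Fin n → ℤ), ∀ x ∈ gr a,
    (MvPolynomial.X i : MvPolynomial (Fin n) K) • x ∈ gr (a + Pi.single i 1)

/-- `M` is positively `g`-determined: `M_a = 0` unless `a ∈ ℕⁿ`, and the
multiplication map `·Xᵢ : M_a → M_{a+eᵢ}` is bijective whenever `aᵢ ≥ gᵢ`. -/
def PosDetermined (gr : (Fin n → ℤ) → Submodule K M) (g : Fin n → ℤ) : Prop :=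
  (∀ a : Fin n → ℤ, ¬ (0 : Fin n → ℤ) ≤ a → gr a = ⊥) ∧
  ∀ (i : Fin n) (a : Fin n → ℤ), g i ≤ a i →
    (∀ x ∈ gr a, (MvPolynomial.X i : MvPolynomial (Fin n) K) • x = 0 → x = 0) ∧
    (∀ y ∈ gr (a + Pi.single i 1), ∃ x ∈ gr a,
      (MvPolynomial.X i : MvPolynomial (Fin n) K) • x = y)

/-- A Hilbert partition `𝔓 : H_M(X)_{⪯g} = Σᵢ Q[aⁱ,bⁱ](X)`: the intervals satisfy
`0 ⪯ aⁱ ⪯ bⁱ ⪯ g` and, in each degree `0 ⪯ c ⪯ g`, the coefficient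
`dim_K M_c` of `H_M(X)_{⪯g}` equals the number of `i` with `aⁱ ⪯ c ⪯ bⁱ`. -/
def IsHilbertPartition (gr : (Fin n → ℤ) → Submodule K M) (g : Fin n → ℤ)
    {r : ℕ} (a b : Fin r → Fin n → ℤ) : Prop :=
  (∀ i, (0 : Fin n → ℤ) ≤ a i ∧ a i ≤ b i ∧ b i ≤ g) ∧
  ∀ c : Fin n → ℤ, (0 : Fin n → ℤ) ≤ c → c ≤ g →
    Module.rank K ↥(gr c) =
      (((Finset.univ : Finset (Fin r)).filter
        fun i => (∀ j, a i j ≤ c j) ∧ (∀ j, c j ≤ b i j)).card : Cardinal)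

/-- `ρ(b) = |Z_b|`. -/
def rho {n : ℕ} (g b : Fin n → ℤ) : ℕ := (Zset g b).card

/-- A Hilbert decomposition `M ≅ ⊕_{i∈I} K[Zᵢ](−sᵢ)` as multigraded `K`-vector
spaces: in each degree `c ∈ ℤⁿ`, `dim_K M_c` equals the number of indices `i`
with `sᵢ ⪯ c` and `c_j = (sᵢ)_j` for all `j ∉ Zᵢ`. -/
def IsHilbertDecomp (gr : (Fin n → ℤ) → Submodule K M)
    {ι : Type*} [Fintype ι] (Z : ι → Finset (Fin n)) (s : ι → Fin n → ℤ) : Prop :=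
  ∀ c : Fin n → ℤ, Module.rank K ↥(gr c) =
    (((Finset.univ : Finset ι).filter
      fun i => (∀ j, s i j ≤ c j) ∧ (∀ j, j ∉ Z i → c j = s i j)).card : Cardinal)

/-!
Multiplication by `Xᵢ` identifies `M_c` with `M_{c+eᵢ}` as soon as `cᵢ ≥ gᵢ`, so
`dim M_c = dim M_{c ∧ g}`, and the Hilbert partition counts the latter as the number of
intervals `[aⁱ,bⁱ]` containing `c ∧ g`. On the other side, `c` is a degree of
`K[Z_b](−w)` for at most one `w ∈ 𝓖[a,b]`, namely `w_j = a_j` for `j ∈ Z_b` and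
`w_j = c_j` otherwise, and this `w` lies in `𝓖[a,b]` exactly when `c ∧ g ∈ [a,b]`.
-/

section Stabilization

variable {ι α : Type*} [DecidableEq ι] {f : (ι → ℤ) → α} {g : ι → ℤ}

theorem apply_update_add_natCast
    (hf : ∀ i c, g i ≤ c i → f (c + Pi.single i 1) = f c) (c : ι → ℤ) (i : ι) (k : ℕ) :
    f (Function.update c i (g i + k)) = f (Function.update c i (g i)) := by
  induction k with
  | zero => simp
  | succ k ih =>
    rw [← ih, ← hf i (Function.update c i (g i + k)) (by simp)]
    congr 1
    ext j
    rcases eq_or_ne j i with rfl | hj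
    · simp [add_assoc]
    · simp [hj]

theorem apply_update_min
    (hf : ∀ i c, g i ≤ c i → f (c + Pi.single i 1) = f c) (c : ι → ℤ) (i : ι) :
    f (Function.update c i (min (c i) (g i))) = f c := by
  rcases le_total (c i) (g i) with h | h
  · simp [min_eq_left h]
  · obtain ⟨k, hk⟩ := Int.eq_ofNat_of_zero_le (sub_nonneg.2 h)
    have hc : c = Function.update c i (g i + k) := by rw [← hk]; simp
    rw [min_eq_right h]
    conv_rhs => rw [hc]
    exact (apply_update_add_natCast hf c i k).symm

theorem apply_inf_eq [Fintype ι]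
    (hf : ∀ i c, g i ≤ c i → f (c + Pi.single i 1) = f c) (c : ι → ℤ) :
    f (c ⊓ g) = f c := by
  suffices h : ∀ s : Finset ι, f (fun j => if j ∈ s then min (c j) (g j) else c j) = f c by
    simpa [Pi.inf_def] using h Finset.univ
  intro s
  induction s using Finset.induction_on with
  | empty => simp
  | insert i s hi ih =>
    rw [← ih, ← apply_update_min hf (fun j => if j ∈ s then min (c j) (g j) else c j) i]
    congr 1
    ext j
    rcases eq_or_ne j i with rfl | hj
    · simp [hi]
    · simp [hj]

end Stabilization

theorem rank_gr_add_single {gr : (Fin n → ℤ) → Submodule K M} (hsmul : GradedSMul gr)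
    {g : Fin n → ℤ} (hM : PosDetermined gr g) {i : Fin n} {c : Fin n → ℤ} (hc : g i ≤ c i) :
    Module.rank K (gr (c + Pi.single i 1)) = Module.rank K (gr c) := by
  obtain ⟨hinj, hsurj⟩ := hM.2 i c hc
  let mulX : gr c →ₗ[K] gr (c + Pi.single i 1) :=
    (DistribSMul.toLinearMap K M (X i : MvPolynomial (Fin n) K)).restrict (hsmul i c)
  have hbij : Function.Bijective mulX := by
    refine ⟨(injective_iff_map_eq_zero mulX).2 fun x hx => Subtype.ext (hinj x x.2 ?_), ?_⟩
    · exact congrArg Subtype.val hx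
    · rintro ⟨y, hy⟩
      obtain ⟨x, hx, rfl⟩ := hsurj y hy
      exact ⟨⟨x, hx⟩, rfl⟩
  exact (LinearEquiv.ofBijective mulX hbij).rank_eq.symm

theorem rank_gr_inf {gr : (Fin n → ℤ) → Submodule K M} (hsmul : GradedSMul gr)
    {g : Fin n → ℤ} (hM : PosDetermined gr g) (c : Fin n → ℤ) :
    Module.rank K (gr (c ⊓ g)) = Module.rank K (gr c) :=
  apply_inf_eq (f := fun c => Module.rank K (gr c))
    (fun _ _ hc => rank_gr_add_single hsmul hM hc) c

section Counting

variable {g : Fin n → ℤ}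

theorem mem_Gset_and_covers_iff {a b c w : Fin n → ℤ} (hbg : b ≤ g) :
    (w ∈ Gset g a b ∧ (∀ j, w j ≤ c j) ∧ ∀ j, j ∉ Zset g b → c j = w j) ↔
      ((∀ j, a j ≤ (c ⊓ g) j) ∧ ∀ j, (c ⊓ g) j ≤ b j) ∧
        w = fun j => if b j = g j then a j else c j := by
  simp only [Gset, Zset, Finset.mem_filter, Finset.mem_Icc, Finset.mem_univ, true_and,
    Pi.le_def, Pi.inf_apply] at hbg ⊢
  constructor
  · rintro ⟨⟨⟨haw, hwb⟩, hZ⟩, hwc, hoff⟩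
    refine ⟨⟨fun j => ?_, fun j => ?_⟩, funext fun j => ?_⟩
    all_goals grind
  · rintro ⟨⟨hac, hcb⟩, rfl⟩
    refine ⟨⟨⟨fun j => ?_, fun j => ?_⟩, fun j hj => ?_⟩, fun j => ?_, fun j hj => ?_⟩
    all_goals grind

theorem card_filter_sigma_Gset {r : ℕ} {a b : Fin r → Fin n → ℤ} (hbg : ∀ i, b i ≤ g)
    (c : Fin n → ℤ) :
    ((Finset.univ : Finset (Σ i : Fin r, {w // w ∈ Gset g (a i) (b i)})).filter
        fun p => (∀ j, (p.2 : Fin n → ℤ) j ≤ c j) ∧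
          ∀ j, j ∉ Zset g (b p.1) → c j = (p.2 : Fin n → ℤ) j).card =
      ((Finset.univ : Finset (Fin r)).filter
        fun i => (∀ j, a i j ≤ (c ⊓ g) j) ∧ ∀ j, (c ⊓ g) j ≤ b i j).card := by
  refine Finset.card_bij (fun p _ => p.1) ?_ ?_ ?_
  · rintro ⟨i, w, hw⟩ hp
    simp only [Finset.mem_filter, Finset.mem_univ, true_and] at hp ⊢
    exact ((mem_Gset_and_covers_iff (hbg i)).1 ⟨hw, hp⟩).1
  · rintro ⟨i, w, hw⟩ hp ⟨i', w', hw'⟩ hp' (rfl : i = i')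
    simp only [Finset.mem_filter, Finset.mem_univ, true_and] at hp hp'
    have hw_eq := ((mem_Gset_and_covers_iff (hbg i)).1 ⟨hw, hp⟩).2
    have hw'_eq := ((mem_Gset_and_covers_iff (hbg i)).1 ⟨hw', hp'⟩).2
    subst hw_eq hw'_eq
    rfl
  · intro i hi
    simp only [Finset.mem_filter, Finset.mem_univ, true_and] at hi
    obtain ⟨hw, hcov⟩ := (mem_Gset_and_covers_iff (hbg i)).2 ⟨hi, rfl⟩
    exact ⟨⟨i, _, hw⟩, by simpa using hcov, rfl⟩

end Counting

theorem IsHilbertPartition.rank_eq_card {K M : Type*} [Field K] [AddCommGroup M] [Module K M]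
    {n : ℕ} {gr : (Fin n → ℤ) → Submodule K M} {g : Fin n → ℤ}
    {r : ℕ} {a b : Fin r → Fin n → ℤ} (hP : IsHilbertPartition gr g a b)
    (hneg : ∀ d : Fin n → ℤ, ¬ 0 ≤ d → gr d = ⊥) {d : Fin n → ℤ} (hdg : d ≤ g) :
    Module.rank K (gr d) =
      (((Finset.univ : Finset (Fin r)).filter
        fun i => (∀ j, a i j ≤ d j) ∧ ∀ j, d j ≤ b i j).card : Cardinal) := by
  by_cases hd : 0 ≤ d
  · exact hP.2 d hd hdg
  · have hempty : (Finset.univ.filter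
        fun i => (∀ j, a i j ≤ d j) ∧ ∀ j, d j ≤ b i j) = ∅ :=
      Finset.filter_eq_empty_iff.2 fun i _ hi => hd ((hP.1 i).1.trans hi.1)
    rw [hneg d hd, rank_bot, hempty, Finset.card_empty, Nat.cast_zero]

theorem hilbertPartition_induces_hilbertDecomposition_general
    (gr : (Fin n → ℤ) → Submodule K M)
    (hsmul : GradedSMul gr)
    (g : Fin n → ℤ)
    (hM : PosDetermined gr g)
    {r : ℕ} (a b : Fin r → Fin n → ℤ)
    (hP : IsHilbertPartition gr g a b) :
    IsHilbertDecomp gr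
      (fun p : Σ i : Fin r, {w // w ∈ Gset g (a i) (b i)} => Zset g (b p.1))
      (fun p => (p.2 : Fin n → ℤ)) := by
  intro c
  rw [← rank_gr_inf hsmul hM c, hP.rank_eq_card hM.1 inf_le_right,
    card_filter_sigma_Gset (fun i => (hP.1 i).2.2) c]

/-- **Theorem (part 1).**  If `M` is a finitely generated multigraded `R`-module
which is positively `g`-determined and `𝔓 : H_M(X)_{⪯g} = Σ_{i=1}^r Q[aⁱ,bⁱ](X)` is
a Hilbert partition, then the family `(K[Z_{bⁱ}], c)` indexed by the pairs
`(i, c)` with `1 ≤ i ≤ r`, `c ∈ 𝓖[aⁱ,bⁱ]`, is a Hilbert decomposition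
`𝔇(𝔓) : M ≅ ⊕ᵢ ⊕_{c ∈ 𝓖[aⁱ,bⁱ]} K[Z_{bⁱ}](−c)` of `M`. -/
theorem hilbertPartition_induces_hilbertDecomposition
    (gr : (Fin n → ℤ) → Submodule K M) [DirectSum.Decomposition gr]
    (hsmul : GradedSMul gr) [Module.Finite (MvPolynomial (Fin n) K) M]
    (g : Fin n → ℤ) (hg : (0 : Fin n → ℤ) ≤ g)
    (hM : PosDetermined gr g)
    {r : ℕ} (a b : Fin r → Fin n → ℤ)
    (hP : IsHilbertPartition gr g a b) :
    IsHilbertDecomp gr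
      (fun p : Σ i : Fin r, {w // w ∈ Gset g (a i) (b i)} => Zset g (b p.1))
      (fun p => (p.2 : Fin n → ℤ)) :=
  hilbertPartition_induces_hilbertDecomposition_general gr hsmul g hM a b hP
end

section
/- Let M be a finitely generated ℤⁿ-graded R-module that is positively g-determined, and let 𝔇 be any Hilbert decomposition of M. Then there exists a Hilbert partition 𝔓 of H_M(X)_{⪯g} whose induced Hilbert decomposition 𝔇(𝔓) satisfies depth 𝔇(𝔓) ≥ depth 𝔇. -/
open MvPolynomial

/-!  Setting: `R = K[X₁,…,Xₙ]` with the `ℤⁿ`-grading `deg Xᵢ = eᵢ`.  A multigraded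
`R`-module is a module `M` over `MvPolynomial (Fin n) K` together with a family
`gr : (Fin n → ℤ) → Submodule K M` of `K`-subspaces forming a direct sum
decomposition of `M` (the class `DirectSum.Decomposition gr`) which is compatible
with the `R`-action (`GradedSMul gr`). -/

variable {K : Type*} [Field K] {n : ℕ} {M : Type*} [AddCommGroup M] [Module K M]
  [Module (MvPolynomial (Fin n) K) M] [IsScalarTower K (MvPolynomial (Fin n) K) M]

/-! Restricting a Hilbert decomposition `⊕ᵢ K[Zᵢ](-sᵢ)` to the box `[0, g]`, each summand with
`sᵢ ⪯ g` becomes the interval `[sᵢ, bᵢ]`, where `bᵢ` is `g` on `Zᵢ` and `sᵢ` off it, and the other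
summands miss the box; these intervals form a Hilbert partition, and `Zᵢ ⊆ Z_{bᵢ}` gives the
depth bound. Positive `g`-determinedness enters twice: `M` vanishes outside `ℕⁿ`, so `0 ⪯ sᵢ`;
and `·Xⱼ` maps `M_{a-eⱼ}` onto `M_a` when `aⱼ > gⱼ`, so `M_{s ⊓ g} ≠ 0` whenever `M_s ≠ 0`,
which makes the partition nonempty (an empty one would have depth `sInf ∅ = 0`). -/

open Finset

namespace PosDetermined

variable {gr : (Fin n → ℤ) → Submodule K M} {g : Fin n → ℤ}

omit [IsScalarTower K (MvPolynomial (Fin n) K) M] in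
theorem add_single_eq_bot (hM : PosDetermined gr g) {i : Fin n} {a : Fin n → ℤ}
    (hi : g i ≤ a i) (ha : gr a = ⊥) : gr (a + Pi.single i 1) = ⊥ := by
  refine eq_bot_iff.2 fun y hy => ?_
  obtain ⟨x, hx, rfl⟩ := (hM.2 i a hi).2 y hy
  rw [ha, Submodule.mem_bot] at hx
  simp [hx]

omit [IsScalarTower K (MvPolynomial (Fin n) K) M] in
theorem eq_bot_of_inf_eq_bot (hM : PosDetermined gr g) (a : Fin n → ℤ)
    (ha : gr (a ⊓ g) = ⊥) : gr a = ⊥ := by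
  induction hm : ∑ j, (a j - g j).toNat generalizing a with
  | zero =>
    have hag : a ≤ g := Pi.le_def.2 fun j => by
      have := sum_eq_zero_iff.1 hm j (mem_univ j)
      omega
    rwa [inf_eq_left.2 hag] at ha
  | succ m ih =>
    obtain ⟨i, hi⟩ : ∃ i, g i < a i := by
      by_contra! h
      have : ∑ j, (a j - g j).toNat = 0 := sum_eq_zero fun j _ => by have := h j; omega
      omega
    set a' := a - Pi.single i 1
    have ha' : a' + Pi.single i 1 = a := sub_add_cancel a _
    have hinf : a' ⊓ g = a ⊓ g := by
      funext j
      rcases eq_or_ne j i with rfl | hj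
      · simp only [a', Pi.inf_apply, Pi.sub_apply, Pi.single_eq_same]
        omega
      · simp [a', Pi.single_eq_of_ne hj]
    have hm' : ∑ j, (a' j - g j).toNat = m := by
      have hsplit :
          ∀ j, (a j - g j).toNat = (a' j - g j).toNat + (Pi.single i 1 : Fin n → ℕ) j := by
        intro j
        rcases eq_or_ne j i with rfl | hj
        · simp only [a', Pi.sub_apply, Pi.single_eq_same]
          omega
        · simp [a', Pi.single_eq_of_ne hj]
      rw [Fintype.sum_congr _ _ hsplit, sum_add_distrib, Fintype.sum_pi_single'] at hm
      omega
    rw [← ha']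
    exact hM.add_single_eq_bot (by simp [a']; omega) (ih a' (hinf ▸ ha) hm')

end PosDetermined

theorem card_le_rho_piecewise (g : Fin n → ℤ) (Z : Finset (Fin n)) (s : Fin n → ℤ) :
    #Z ≤ rho g (Z.piecewise g s) :=
  card_le_card fun j hj => mem_filter.2 ⟨mem_univ j, piecewise_eq_of_mem _ _ _ hj⟩

theorem le_piecewise_iff {g c s : Fin n → ℤ} (Z : Finset (Fin n)) (hcg : c ≤ g) (hsc : s ≤ c) :
    c ≤ Z.piecewise g s ↔ ∀ j ∉ Z, c j = s j := by
  refine ⟨fun h j hj => le_antisymm ?_ (hsc j), fun h j => ?_⟩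
  · simpa [piecewise_eq_of_notMem _ _ _ hj] using h j
  · by_cases hj : j ∈ Z
    · simpa [piecewise_eq_of_mem _ _ _ hj] using hcg j
    · simp [piecewise_eq_of_notMem _ _ _ hj, h j hj]

namespace IsHilbertDecomp

variable {gr : (Fin n → ℤ) → Submodule K M} {ι : Type*} [Fintype ι]
  {Z : ι → Finset (Fin n)} {s : ι → Fin n → ℤ}

omit [Module (MvPolynomial (Fin n) K) M] [IsScalarTower K (MvPolynomial (Fin n) K) M] in
theorem ne_bot_iff (hD : IsHilbertDecomp gr Z s) (c : Fin n → ℤ) :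
    gr c ≠ ⊥ ↔ ∃ i, s i ≤ c ∧ ∀ j ∉ Z i, c j = s i j := by
  rw [Ne, ← Submodule.rank_eq_zero, hD c, Nat.cast_eq_zero, card_eq_zero, ← Ne,
    ← nonempty_iff_ne_empty, filter_nonempty_iff]
  simp [Pi.le_def]

omit [Module (MvPolynomial (Fin n) K) M] [IsScalarTower K (MvPolynomial (Fin n) K) M] in
theorem isHilbertPartition (hD : IsHilbertDecomp gr Z s) (hs : ∀ i, 0 ≤ s i) {g : Fin n → ℤ}
    {r : ℕ} (e : Fin r ≃ {i // s i ≤ g}) :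
    IsHilbertPartition gr g (fun k => s (e k)) (fun k => (Z (e k)).piecewise g (s (e k))) := by
  refine ⟨fun k => ⟨hs _, piecewise_mem_Icc' _ (e k).2⟩, fun c _ hcg => ?_⟩
  rw [hD c]
  refine congrArg _ (card_nbij (fun k => (e k : ι)) ?_ ?_ ?_).symm
  · intro k hk
    simp only [coe_filter, mem_univ, true_and, Set.mem_ofPred_eq, ← Pi.le_def] at hk ⊢
    exact ⟨hk.1, (le_piecewise_iff _ hcg hk.1).1 hk.2⟩
  · exact (Subtype.val_injective.comp e.injective).injOn
  · intro i hi
    simp only [coe_filter, mem_univ, true_and, Set.mem_ofPred_eq, ← Pi.le_def] at hi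
    obtain ⟨k, rfl⟩ : ∃ k, (e k : ι) = i := ⟨e.symm ⟨i, hi.1.trans hcg⟩, by simp⟩
    refine ⟨k, ?_, rfl⟩
    simp only [coe_filter, mem_univ, true_and, Set.mem_ofPred_eq, ← Pi.le_def]
    exact ⟨hi.1, (le_piecewise_iff _ hcg hi.1).2 hi.2⟩

end IsHilbertDecomp

theorem exists_hilbertPartition_depth_ge_general
    (gr : (Fin n → ℤ) → Submodule K M)
    (g : Fin n → ℤ)
    (hM : PosDetermined gr g)
    {ι : Type*} [Fintype ι] [Nonempty ι]
    (Z : ι → Finset (Fin n)) (s : ι → Fin n → ℤ)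
    (hD : IsHilbertDecomp gr Z s) :
    ∃ (r : ℕ) (a b : Fin r → Fin n → ℤ),
      IsHilbertPartition gr g a b ∧
        sInf {d | ∃ i : ι, d = (Z i).card} ≤ sInf {d | ∃ i : Fin r, d = rho g (b i)} := by
  classical
  have hshift : ∀ i, gr (s i) ≠ ⊥ := fun i => (hD.ne_bot_iff _).2 ⟨i, le_rfl, fun _ _ => rfl⟩
  have hs : ∀ i, 0 ≤ s i := fun i => by_contra fun h => hshift i (hM.1 _ h)
  obtain ⟨i₀⟩ := ‹Nonempty ι›
  obtain ⟨i, hi, -⟩ := (hD.ne_bot_iff _).1 (mt (hM.eq_bot_of_inf_eq_bot _) (hshift i₀))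
  let e := (Fintype.equivFin {i // s i ≤ g}).symm
  have : Nonempty (Fin (Fintype.card {i // s i ≤ g})) :=
    e.nonempty_congr.2 ⟨⟨i, hi.trans inf_le_right⟩⟩
  refine ⟨_, _, _, hD.isHilbertPartition hs e, le_csInf ⟨_, Classical.arbitrary _, rfl⟩ ?_⟩
  rintro _ ⟨k, rfl⟩
  exact (card_le_rho_piecewise _ _ _).trans' (Nat.sInf_le ⟨_, rfl⟩)

/-- **Theorem (part 2).**  If `M` is a finitely generated multigraded `R`-module
which is positively `g`-determined and `𝔇 : M ≅ ⊕_{i∈I} K[Zᵢ](−sᵢ)` is any Hilbert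
decomposition of `M`, then there is a Hilbert partition `𝔓` of `H_M(X)_{⪯g}` whose
induced Hilbert decomposition `𝔇(𝔓)` has depth `min_i ρ(bⁱ)` at least the depth
`min_i |Zᵢ|` of `𝔇`. -/
theorem exists_hilbertPartition_depth_ge
    (gr : (Fin n → ℤ) → Submodule K M) [DirectSum.Decomposition gr]
    (hsmul : GradedSMul gr) [Module.Finite (MvPolynomial (Fin n) K) M]
    (g : Fin n → ℤ) (hg : (0 : Fin n → ℤ) ≤ g)
    (hM : PosDetermined gr g)
    {ι : Type*} [Fintype ι] [Nonempty ι]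
    (Z : ι → Finset (Fin n)) (s : ι → Fin n → ℤ)
    (hD : IsHilbertDecomp gr Z s) :
    ∃ (r : ℕ) (a b : Fin r → Fin n → ℤ),
      IsHilbertPartition gr g a b ∧
        sInf {d | ∃ i : ι, d = (Z i).card} ≤ sInf {d | ∃ i : Fin r, d = rho g (b i)} :=
  exists_hilbertPartition_depth_ge_general gr g hM Z s hD
end

section
/- Let M be a finitely generated ℤⁿ-graded R-module that is positively g-determined. Then Hdepth M = max{ depth 𝔇(𝔓) : 𝔓 is a Hilbert partition of H_M(X)_{⪯g} }. In particular, there exists a Hilbert partition 𝔓 : H_M(X)_{⪯g} = Σ_{i=1}^r Q[aⁱ,bⁱ](X) such that Hdepth M = min{ρ(bⁱ) : i = 1,…,r}. -/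
open MvPolynomial

/-!  Setting: `R = K[X₁,…,Xₙ]` with the `ℤⁿ`-grading `deg Xᵢ = eᵢ`.  A multigraded
`R`-module is a module `M` over `MvPolynomial (Fin n) K` together with a family
`gr : (Fin n → ℤ) → Submodule K M` of `K`-subspaces forming a direct sum
decomposition of `M` (the class `DirectSum.Decomposition gr`) which is compatible
with the `R`-action (`GradedSMul gr`). -/

variable {K : Type*} [Field K] {n : ℕ} {M : Type*} [AddCommGroup M] [Module K M]
  [Module (MvPolynomial (Fin n) K) M] [IsScalarTower K (MvPolynomial (Fin n) K) M]

/-- The Hilbert depth of `M`: the maximum of the depths `min_i |Zᵢ|` over all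
Hilbert decompositions `M ≅ ⊕_{i∈I} K[Zᵢ](−sᵢ)` of `M` (indexed by nonempty
finite index sets `Fin (k+1)`). -/
noncomputable def hdepth (gr : (Fin n → ℤ) → Submodule K M) : ℕ :=
  sSup {d | ∃ (k : ℕ) (Z : Fin (k + 1) → Finset (Fin n)) (s : Fin (k + 1) → Fin n → ℤ),
    IsHilbertDecomp gr Z s ∧
      d = Finset.univ.inf' Finset.univ_nonempty fun i => (Z i).card}

/-!
Positive `g`-determinedness makes `dim M_e = dim M_{e ⊓ g}` for every `e`. The cones
`c + ℕ^{Z_b}`, `c ∈ 𝓖[a,b]`, partition exactly the degrees `e` with `a ⪯ e ⊓ g ⪯ b`, so the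
decomposition `𝔇(𝔓)` induced by a Hilbert partition is a Hilbert decomposition of depth
`min ρ(bⁱ)`. Conversely, a Hilbert decomposition `⊕ K[Zᵢ](−sᵢ)` restricted to `[0,g]` is the
Hilbert partition by the intervals `[sᵢ, tᵢ]` with `sᵢ ⪯ g`, where `tᵢ` agrees with `g` on `Zᵢ`
and with `sᵢ` elsewhere; its depth is at least `min |Zᵢ|`. So the two sets of depths have the
same maximum, attained by a partition. Hilbert partitions exist because a finitely generated
graded module has finite-dimensional components.
-/

theorem Nat.sSup_eq_and_sSup_mem_of_cofinal_subset {S T : Set ℕ} (hT : T.Nonempty)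
    (hS : BddAbove S) (hTS : T ⊆ S) (hST : ∀ s ∈ S, ∃ t ∈ T, s ≤ t) :
    sSup S = sSup T ∧ sSup S ∈ T := by
  obtain ⟨t, ht, hle⟩ := hST _ (Nat.sSup_mem (hT.mono hTS) hS)
  have hmem : sSup S ∈ T := le_antisymm (le_csSup hS (hTS ht)) hle ▸ ht
  exact ⟨(IsGreatest.csSup_eq ⟨hmem, fun t ht => le_csSup hS (hTS ht)⟩).symm, hmem⟩

theorem Finset.inf'_univ_comp_equiv {α β γ : Type*} [Fintype α] [Fintype β] [Nonempty α]
    [Nonempty β] [ConditionallyCompleteLinearOrder γ] (e : α ≃ β) (f : β → γ) :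
    univ.inf' univ_nonempty (f ∘ e) = univ.inf' univ_nonempty f := by
  simp only [Finset.inf'_univ_eq_ciInf]
  exact e.iInf_comp

theorem exists_equiv_fin_succ (ι : Type*) [Fintype ι] [Nonempty ι] :
    ∃ k, Nonempty (Fin (k + 1) ≃ ι) :=
  ⟨Fintype.card ι - 1,
    ⟨(Fintype.equivFinOfCardEq (Nat.sub_add_cancel Fintype.card_pos).symm).symm⟩⟩

theorem apply_inf_eq_of_apply_add_single_eq {ι α : Type*} [Fintype ι] [DecidableEq ι]
    {g : ι → ℤ} {f : (ι → ℤ) → α}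
    (hf : ∀ i a, g i ≤ a i → f (a + Pi.single i 1) = f a) (a : ι → ℤ) :
    f (a ⊓ g) = f a := by
  have capAt : ∀ (a : ι → ℤ) i, f (Function.update a i (a i ⊓ g i)) = f a := by
    intro a i
    have raise (k : ℕ) :
        f (Function.update a i (g i + k)) = f (Function.update a i (g i)) := by
      induction k with
      | zero => simp
      | succ k ih =>
        refine Eq.trans ?_ ((hf i _ (by simp)).trans ih)
        congr 1
        ext j
        rcases eq_or_ne j i with rfl | hj <;> simp [*, add_assoc]
    rcases le_total (a i) (g i) with h | h
    · rw [inf_eq_left.2 h, Function.update_eq_self]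
    · obtain ⟨k, hk⟩ := Int.eq_ofNat_of_zero_le (sub_nonneg.2 h)
      rw [inf_eq_right.2 h, ← raise k, ← hk, add_sub_cancel, Function.update_eq_self]
  suffices ∀ s : Finset ι, f (fun j => if j ∈ s then a j ⊓ g j else a j) = f a by
    simpa [← Pi.inf_apply] using this Finset.univ
  intro s
  induction s using Finset.induction_on with
  | empty => simp
  | insert i s hi ih =>
    refine Eq.trans ?_ ((capAt _ i).trans ih)
    congr 1
    ext j
    rcases eq_or_ne j i with rfl | hj <;> simp [*]

theorem left_mem_Gset {g a b : Fin n → ℤ} (hab : a ≤ b) : a ∈ Gset g a b := by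
  simp [Gset, hab]

theorem mem_Gset_and_mem_cone_iff {g a b c e : Fin n → ℤ} (hab : a ≤ b) (hbg : b ≤ g) :
    (c ∈ Gset g a b ∧ (∀ j, c j ≤ e j) ∧ ∀ j, j ∉ Zset g b → e j = c j) ↔
      ((∀ j, a j ≤ (e ⊓ g) j) ∧ ∀ j, (e ⊓ g) j ≤ b j) ∧
        c = (Zset g b).piecewise a e := by
  simp only [Gset, Zset, Finset.mem_filter, Finset.mem_Icc, Finset.mem_univ, true_and,
    Finset.piecewise, Pi.le_def, Pi.inf_apply, funext_iff, ← forall_and]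
  refine forall_congr' fun j => ?_
  have hab : a j ≤ b j := hab j
  have hbg : b j ≤ g j := hbg j
  split_ifs <;> omega

theorem mem_cone_iff_le_piecewise {Z : Finset (Fin n)} {g s c : Fin n → ℤ} (hcg : c ≤ g) :
    ((∀ j, s j ≤ c j) ∧ ∀ j, j ∉ Z → c j = s j) ↔
      (∀ j, s j ≤ c j) ∧ ∀ j, c j ≤ Z.piecewise g s j := by
  classical
  simp only [← forall_and]
  refine forall_congr' fun j => ?_
  have hcg : c j ≤ g j := hcg j
  by_cases hj : j ∈ Z
  · simp only [hj, Finset.piecewise_eq_of_mem, not_true_eq_false, false_implies, and_true, hcg]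
  · simp only [hj, Finset.piecewise_eq_of_notMem, not_false_eq_true, true_implies]
    omega

section Graded

open scoped Pointwise

variable (gr : (Fin n → ℤ) → Submodule K M)

theorem rank_gr_add_single_eq (hsmul : GradedSMul gr) {g : Fin n → ℤ} (hM : PosDetermined gr g)
    {i : Fin n} {a : Fin n → ℤ} (h : g i ≤ a i) :
    Module.rank K (gr (a + Pi.single i 1)) = Module.rank K (gr a) := by
  let mulX : gr a →ₗ[K] gr (a + Pi.single i 1) :=
    ((LinearMap.lsmul (MvPolynomial (Fin n) K) M (X i)).restrictScalars K).restrict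
      (hsmul i a)
  refine (LinearEquiv.ofBijective mulX ⟨fun x y hxy => ?_, fun y => ?_⟩).rank_eq.symm
  · have hXxy : (X i : MvPolynomial (Fin n) K) • ((x : M) - y) = 0 := by
      rw [smul_sub, sub_eq_zero]
      exact congrArg Subtype.val hxy
    exact Subtype.ext (sub_eq_zero.1 ((hM.2 i a h).1 _ (sub_mem x.2 y.2) hXxy))
  · obtain ⟨x, hx, hxy⟩ := (hM.2 i a h).2 y y.2
    exact ⟨⟨x, hx⟩, Subtype.ext hxy⟩

theorem rank_gr_inf_eq (hsmul : GradedSMul gr) {g : Fin n → ℤ} (hM : PosDetermined gr g)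
    (a : Fin n → ℤ) : Module.rank K (gr (a ⊓ g)) = Module.rank K (gr a) :=
  apply_inf_eq_of_apply_add_single_eq (f := fun c => Module.rank K (gr c))
    (fun _ _ h => rank_gr_add_single_eq gr hsmul hM h) a

omit [IsScalarTower K (MvPolynomial (Fin n) K) M] in
theorem X_pow_smul_mem (hsmul : GradedSMul gr) (i : Fin n) (k : ℕ) {a : Fin n → ℤ} {x : M}
    (hx : x ∈ gr a) :
    (X i ^ k : MvPolynomial (Fin n) K) • x ∈ gr (a + k • Pi.single i 1) := by
  induction k with
  | zero => simpa using hx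
  | succ k ih =>
    rw [pow_succ', mul_smul, succ_nsmul, ← add_assoc]
    exact hsmul i _ _ ih

omit [IsScalarTower K (MvPolynomial (Fin n) K) M] in
theorem monomial_smul_mem (hsmul : GradedSMul gr) (u : Fin n →₀ ℕ) {a : Fin n → ℤ} {x : M}
    (hx : x ∈ gr a) :
    (monomial u 1 : MvPolynomial (Fin n) K) • x ∈ gr (a + fun j => (u j : ℤ)) := by
  induction u using Finsupp.induction generalizing a x with
  | zero => simpa [Pi.add_def] using hx
  | single_add i k u _ _ ih =>
    rw [monomial_single_add, mul_smul]
    convert X_pow_smul_mem gr hsmul i k (ih hx) using 2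
    ext j
    rcases eq_or_ne j i with rfl | hj <;> simp [Finsupp.single_apply, Ne.symm, *]
    ring

omit [IsScalarTower K (MvPolynomial (Fin n) K) M] in
theorem exists_finset_homogeneous_span_eq_top [DirectSum.Decomposition gr]
    [Module.Finite (MvPolynomial (Fin n) K) M] :
    ∃ s : Finset ((Fin n → ℤ) × M), (∀ p ∈ s, p.2 ∈ gr p.1) ∧
      Submodule.span (MvPolynomial (Fin n) K)
        (Prod.snd '' (s : Set ((Fin n → ℤ) × M))) = ⊤ := by
  classical
  obtain ⟨F, hF⟩ := Module.Finite.fg_top (R := MvPolynomial (Fin n) K) (M := M)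
  let ι₀ := Σ x : F, (DirectSum.decompose gr x.1).support
  refine ⟨Finset.univ.image fun i : ι₀ => (i.2.1, (DirectSum.decompose gr i.1.1 i.2 : M)),
    by simp, ?_⟩
  rw [← top_le_iff, ← hF, Submodule.span_le]
  intro m hm
  rw [← DirectSum.sum_support_decompose gr m]
  exact sum_mem fun d hd =>
    Submodule.subset_span (by simpa using ⟨⟨⟨m, hm⟩, d, hd⟩, rfl⟩)

theorem finiteDimensional_gr [DirectSum.Decomposition gr] (hsmul : GradedSMul gr)
    [Module.Finite (MvPolynomial (Fin n) K) M] (c : Fin n → ℤ) :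
    FiniteDimensional K (gr c) := by
  classical
  obtain ⟨s, hs_gr, hs_span⟩ := exists_finset_homogeneous_span_eq_top gr
  let π : M →ₗ[K] M := (gr c).subtype ∘ₗ DirectSum.component K _ (fun d => gr d) c ∘ₗ
    (DirectSum.decomposeLinearEquiv gr).toLinearMap
  have hπ : ∀ x, π x = DirectSum.decompose gr x c := fun _ => rfl
  let S := Set.range (fun u => (monomial u 1 : MvPolynomial (Fin n) K)) •
    Prod.snd '' (s : Set ((Fin n → ℤ) × M))
  have hS : Submodule.span K S = ⊤ := by
    rw [Submodule.span_smul_of_span_eq_top (by simpa using (basisMonomials (Fin n) K).span_eq),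
      hs_span, Submodule.restrictScalars_top]
  -- the only monomial multiple of `p.2` that can have degree `c`
  let lift (p : (Fin n → ℤ) × M) : M :=
    (monomial (Finsupp.equivFunOnFinite.symm fun j => (c j - p.1 j).toNat) 1 :
      MvPolynomial (Fin n) K) • p.2
  have hπS : π '' S ⊆ insert 0 (lift '' s) := by
    rintro _ ⟨_, ⟨_, ⟨u, rfl⟩, _, ⟨p, hp, rfl⟩, rfl⟩, rfl⟩
    have hmem := monomial_smul_mem gr hsmul u (hs_gr p hp)
    by_cases hdeg : (p.1 + fun j => (u j : ℤ)) = c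
    · have hu : u = Finsupp.equivFunOnFinite.symm fun j => (c j - p.1 j).toNat := by
        ext j
        have := congrFun hdeg j
        simp only [Pi.add_apply] at this
        simp only [Finsupp.equivFunOnFinite_symm_apply_apply]
        omega
      refine Or.inr ⟨p, hp, ?_⟩
      rw [hπ, DirectSum.decompose_of_mem_same gr (hdeg ▸ hmem), hu]
    · exact Or.inl (by rw [hπ, DirectSum.decompose_of_mem_ne gr hmem hdeg])
  have hle : gr c ≤ Submodule.span K (insert 0 (lift '' s)) := by
    intro x hx
    rw [← DirectSum.decompose_of_mem_same gr hx, ← hπ]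
    refine Submodule.span_mono hπS ?_
    rw [Submodule.span_image, hS]
    exact Submodule.mem_map_of_mem Submodule.mem_top
  have := FiniteDimensional.span_of_finite K ((s.finite_toSet.image lift).insert 0)
  exact Submodule.finiteDimensional_of_le hle

end Graded

section HilbertPartition

open Finset

variable {gr : (Fin n → ℤ) → Submodule K M} {g : Fin n → ℤ}

omit [Module (MvPolynomial (Fin n) K) M] [IsScalarTower K (MvPolynomial (Fin n) K) M]

theorem exists_gr_ne_bot_of_le [DirectSum.Decomposition gr] [Nontrivial M]
    (hg : (0 : Fin n → ℤ) ≤ g) (hneg : ∀ a, ¬ (0 : Fin n → ℤ) ≤ a → gr a = ⊥)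
    (hcap : ∀ a, Module.rank K (gr (a ⊓ g)) = Module.rank K (gr a)) :
    ∃ c, (0 : Fin n → ℤ) ≤ c ∧ c ≤ g ∧ gr c ≠ ⊥ := by
  obtain ⟨c, hc⟩ : ∃ c, gr c ≠ ⊥ := by
    by_contra! h
    have := (DirectSum.Decomposition.isInternal gr).submodule_iSup_eq_top
    simp [show gr = fun _ => ⊥ from funext h] at this
  have hc0 : (0 : Fin n → ℤ) ≤ c := not_not.1 (mt (hneg c) hc)
  refine ⟨c ⊓ g, le_inf hc0 hg, inf_le_right, ?_⟩
  rwa [Ne, ← Submodule.rank_eq_zero, hcap, Submodule.rank_eq_zero]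

theorem IsHilbertPartition.rank_eq_card_inf {r : ℕ} {a b : Fin r → Fin n → ℤ}
    (hP : IsHilbertPartition gr g a b) (hneg : ∀ a, ¬ (0 : Fin n → ℤ) ≤ a → gr a = ⊥)
    (hcap : ∀ a, Module.rank K (gr (a ⊓ g)) = Module.rank K (gr a)) (e : Fin n → ℤ) :
    Module.rank K (gr e) = ((univ.filter fun i =>
      (∀ j, a i j ≤ (e ⊓ g) j) ∧ ∀ j, (e ⊓ g) j ≤ b i j).card : Cardinal) := by
  rw [← hcap e]
  by_cases he : (0 : Fin n → ℤ) ≤ e ⊓ g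
  · exact hP.2 _ he inf_le_right
  · rw [hneg _ he, rank_bot, eq_comm, Nat.cast_eq_zero, card_eq_zero,
      filter_eq_empty_iff]
    exact fun i _ hi => he fun j => ((hP.1 i).1 j).trans (hi.1 j)

theorem IsHilbertPartition.isHilbertDecomp {r : ℕ} {a b : Fin r → Fin n → ℤ}
    (hP : IsHilbertPartition gr g a b) (hneg : ∀ a, ¬ (0 : Fin n → ℤ) ≤ a → gr a = ⊥)
    (hcap : ∀ a, Module.rank K (gr (a ⊓ g)) = Module.rank K (gr a)) :
    IsHilbertDecomp gr (ι := Σ i, Gset g (a i) (b i))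
      (fun p => Zset g (b p.1)) (fun p => p.2) := by
  classical
  intro e
  rw [hP.rank_eq_card_inf hneg hcap e, Nat.cast_inj]
  have hrep (i : Fin r) (c : Fin n → ℤ) :=
    mem_Gset_and_mem_cone_iff (c := c) (e := e) (hP.1 i).2.1 (hP.1 i).2.2
  have hrep_mem {i} (hi : i ∈ univ.filter fun i =>
      (∀ j, a i j ≤ (e ⊓ g) j) ∧ ∀ j, (e ⊓ g) j ≤ b i j) :=
    (hrep i _).2 ⟨(mem_filter.1 hi).2, rfl⟩
  refine card_bij (fun i hi => ⟨i, (Zset g (b i)).piecewise (a i) e, (hrep_mem hi).1⟩)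
    (fun i hi => mem_filter.2 ⟨mem_univ _, (hrep_mem hi).2⟩)
    (fun i _ i' _ h => congrArg Sigma.fst h) ?_
  · rintro ⟨i, c, hc⟩ hic
    obtain ⟨hi, rfl⟩ := (hrep i c).1 ⟨hc, (mem_filter.1 hic).2⟩
    exact ⟨i, by simpa using hi, rfl⟩

theorem IsHilbertDecomp.exists_fin {ι : Type*} [Fintype ι] [Nonempty ι]
    {Z : ι → Finset (Fin n)} {s : ι → Fin n → ℤ} (hD : IsHilbertDecomp gr Z s) :
    ∃ (k : ℕ) (Z' : Fin (k + 1) → Finset (Fin n)) (s' : Fin (k + 1) → Fin n → ℤ),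
      IsHilbertDecomp gr Z' s' ∧
        univ.inf' univ_nonempty (fun i => (Z' i).card) =
          univ.inf' univ_nonempty (fun i => (Z i).card) := by
  classical
  obtain ⟨k, ⟨e⟩⟩ := exists_equiv_fin_succ ι
  refine ⟨k, Z ∘ e, s ∘ e, fun c => ?_, inf'_univ_comp_equiv e (fun i => (Z i).card)⟩
  rw [hD c, Nat.cast_inj]
  exact (card_equiv e (by simp)).symm

theorem IsHilbertPartition.exists_isHilbertDecomp {r : ℕ} {a b : Fin (r + 1) → Fin n → ℤ}
    (hP : IsHilbertPartition gr g a b) (hneg : ∀ a, ¬ (0 : Fin n → ℤ) ≤ a → gr a = ⊥)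
    (hcap : ∀ a, Module.rank K (gr (a ⊓ g)) = Module.rank K (gr a)) :
    ∃ (k : ℕ) (Z : Fin (k + 1) → Finset (Fin n)) (s : Fin (k + 1) → Fin n → ℤ),
      IsHilbertDecomp gr Z s ∧
        univ.inf' univ_nonempty (fun i => (Z i).card) =
          univ.inf' univ_nonempty (fun i => rho g (b i)) := by
  have hGset (i : Fin (r + 1)) : a i ∈ Gset g (a i) (b i) := left_mem_Gset (hP.1 i).2.1
  have : Nonempty (Σ i, Gset g (a i) (b i)) := ⟨⟨0, a 0, hGset 0⟩⟩
  obtain ⟨k, Z, s, hD, hdepth⟩ := (hP.isHilbertDecomp hneg hcap).exists_fin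
  refine ⟨k, Z, s, hD, hdepth.trans (le_antisymm ?_ ?_)⟩
  · exact le_inf' _ _ fun i _ =>
      inf'_le _ (mem_univ (⟨i, a i, hGset i⟩ : Σ i, Gset g (a i) (b i)))
  · exact le_inf' _ _ fun p _ => inf'_le (fun i => rho g (b i)) (mem_univ p.1)

theorem exists_isHilbertPartition_of_rank_eq_card {ι : Type*} [Fintype ι] [Nonempty ι]
    (a b : ι → Fin n → ℤ)
    (hab : ∀ i, (0 : Fin n → ℤ) ≤ a i ∧ a i ≤ b i ∧ b i ≤ g)
    (hrank : ∀ c : Fin n → ℤ, (0 : Fin n → ℤ) ≤ c → c ≤ g →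
      Module.rank K (gr c) =
        ((univ.filter fun i => (∀ j, a i j ≤ c j) ∧ ∀ j, c j ≤ b i j).card : Cardinal)) :
    ∃ (r : ℕ) (a' b' : Fin (r + 1) → Fin n → ℤ), IsHilbertPartition gr g a' b' ∧
      univ.inf' univ_nonempty (fun i => rho g (b' i)) =
        univ.inf' univ_nonempty (fun i => rho g (b i)) := by
  classical
  obtain ⟨r, ⟨e⟩⟩ := exists_equiv_fin_succ ι
  refine ⟨r, a ∘ e, b ∘ e, ⟨fun i => hab (e i), fun c h0c hcg => ?_⟩,
    inf'_univ_comp_equiv e (fun i => rho g (b i))⟩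
  rw [hrank c h0c hcg, Nat.cast_inj]
  exact (card_equiv e (by simp)).symm

theorem IsHilbertDecomp.nonneg {ι : Type*} [Fintype ι] {Z : ι → Finset (Fin n)}
    {s : ι → Fin n → ℤ} (hD : IsHilbertDecomp gr Z s)
    (hneg : ∀ a, ¬ (0 : Fin n → ℤ) ≤ a → gr a = ⊥) (i : ι) :
    (0 : Fin n → ℤ) ≤ s i := by
  classical
  by_contra h
  have := hD (s i)
  rw [hneg _ h, rank_bot, eq_comm, Nat.cast_eq_zero] at this
  exact card_ne_zero_of_mem
    (mem_filter.2 ⟨mem_univ i, fun _ => le_rfl, fun _ _ => rfl⟩) this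

theorem IsHilbertDecomp.exists_isHilbertPartition [DirectSum.Decomposition gr] [Nontrivial M]
    {ι : Type*} [Fintype ι] [Nonempty ι] {Z : ι → Finset (Fin n)} {s : ι → Fin n → ℤ}
    (hD : IsHilbertDecomp gr Z s) (hg : (0 : Fin n → ℤ) ≤ g)
    (hneg : ∀ a, ¬ (0 : Fin n → ℤ) ≤ a → gr a = ⊥)
    (hcap : ∀ a, Module.rank K (gr (a ⊓ g)) = Module.rank K (gr a)) :
    ∃ (r : ℕ) (a b : Fin (r + 1) → Fin n → ℤ), IsHilbertPartition gr g a b ∧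
      univ.inf' univ_nonempty (fun i => (Z i).card) ≤
        univ.inf' univ_nonempty (fun i => rho g (b i)) := by
  classical
  have hsg {i : ι} {c : Fin n → ℤ} (hsc : ∀ j, s i j ≤ c j) (hcg : c ≤ g) : s i ≤ g :=
    fun j => (hsc j).trans (hcg j)
  have : Nonempty {i // s i ≤ g} := by
    obtain ⟨c, -, hcg, hc⟩ := exists_gr_ne_bot_of_le hg hneg hcap
    rw [Ne, ← Submodule.rank_eq_zero, hD c, Nat.cast_eq_zero, ← Ne, card_ne_zero] at hc
    obtain ⟨i, hi⟩ := hc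
    exact ⟨i, hsg (mem_filter.1 hi).2.1 hcg⟩
  obtain ⟨r, a, b, hP, hdepth⟩ := exists_isHilbertPartition_of_rank_eq_card (gr := gr)
    (fun i : {i // s i ≤ g} => s i) (fun i => (Z i).piecewise g (s i))
    (fun i => ⟨hD.nonneg hneg i, (Z i).le_piecewise_of_le_of_le i.2 le_rfl,
      (Z i).piecewise_le_of_le_of_le le_rfl i.2⟩)
    (fun c _ hcg => by
      rw [hD c, Nat.cast_inj]
      refine card_bij (fun i hi => ⟨i, hsg (mem_filter.1 hi).2.1 hcg⟩)
        (fun i hi => ?_) (fun _ _ _ _ h => congrArg Subtype.val h) ?_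
      · simpa [← mem_cone_iff_le_piecewise hcg] using hi
      · rintro ⟨i, hig⟩ hi
        exact ⟨i, by simpa [mem_cone_iff_le_piecewise hcg] using hi, rfl⟩)
  refine ⟨r, a, b, hP, hdepth ▸ le_inf' _ _ fun i _ => ?_⟩
  refine (inf'_le _ (mem_univ i.1)).trans (card_le_card fun j hj => ?_)
  simp [Zset, hj]

theorem exists_isHilbertPartition [DirectSum.Decomposition gr] [Nontrivial M]
    (hg : (0 : Fin n → ℤ) ≤ g) (hneg : ∀ a, ¬ (0 : Fin n → ℤ) ≤ a → gr a = ⊥)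
    (hcap : ∀ a, Module.rank K (gr (a ⊓ g)) = Module.rank K (gr a))
    (hfin : ∀ c, FiniteDimensional K (gr c)) :
    ∃ (r : ℕ) (a b : Fin (r + 1) → Fin n → ℤ), IsHilbertPartition gr g a b := by
  classical
  -- one degenerate interval `[c, c]` for each basis vector of `M_c`, `0 ⪯ c ⪯ g`
  let ι := Σ c : Icc (0 : Fin n → ℤ) g, Fin (Module.finrank K (gr c))
  have : Nonempty ι := by
    obtain ⟨c, hc0, hcg, hc⟩ := exists_gr_ne_bot_of_le hg hneg hcap
    exact ⟨⟨c, mem_Icc.2 ⟨hc0, hcg⟩⟩,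
      ⟨0, Nat.pos_of_ne_zero (Submodule.finrank_eq_zero.not.2 hc)⟩⟩
  obtain ⟨r, a, b, hP, -⟩ := exists_isHilbertPartition_of_rank_eq_card (gr := gr)
    (fun p : ι => (p.1 : Fin n → ℤ)) (fun p => p.1)
    (fun p => ⟨(mem_Icc.1 p.1.2).1, le_rfl, (mem_Icc.1 p.1.2).2⟩)
    (fun c h0c hcg => by
      rw [← Module.finrank_eq_rank, Nat.cast_inj, ← card_fin (Module.finrank K (gr c))]
      refine card_bij (fun t _ => ⟨⟨c, mem_Icc.2 ⟨h0c, hcg⟩⟩, t⟩) (by simp)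
        (fun _ _ _ _ h => eq_of_heq (Sigma.mk.inj_iff.1 h).2) ?_
      rintro ⟨⟨d, hd⟩, t⟩ hdc
      obtain rfl : d = c := le_antisymm (mem_filter.1 hdc).2.1 (mem_filter.1 hdc).2.2
      exact ⟨t, mem_univ t, rfl⟩)
  exact ⟨r, a, b, hP⟩

end HilbertPartition

/-- **Corollary.**  For a finitely generated multigraded `R`-module `M` which is
positively `g`-determined, `Hdepth M` is the maximum over all Hilbert partitions
`𝔓` of `H_M(X)_{⪯g}` of the depth of the induced Hilbert decomposition `𝔇(𝔓)`
(which equals `min_i ρ(bⁱ)`); in particular some Hilbert partition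
`𝔓 : H_M(X)_{⪯g} = Σᵢ Q[aⁱ,bⁱ](X)` satisfies `Hdepth M = min_i ρ(bⁱ)`. -/
theorem hdepth_eq_max_over_hilbertPartitions
    (gr : (Fin n → ℤ) → Submodule K M) [DirectSum.Decomposition gr]
    (hsmul : GradedSMul gr) [Module.Finite (MvPolynomial (Fin n) K) M]
    [Nontrivial M]
    (g : Fin n → ℤ) (hg : (0 : Fin n → ℤ) ≤ g)
    (hM : PosDetermined gr g) :
    hdepth gr
        = sSup {d | ∃ (r : ℕ) (a b : Fin (r + 1) → Fin n → ℤ),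
            IsHilbertPartition gr g a b ∧
              d = Finset.univ.inf' Finset.univ_nonempty fun i => rho g (b i)} ∧
      ∃ (r : ℕ) (a b : Fin (r + 1) → Fin n → ℤ),
        IsHilbertPartition gr g a b ∧
          hdepth gr = Finset.univ.inf' Finset.univ_nonempty fun i => rho g (b i) := by
  have hcap := rank_gr_inf_eq gr hsmul hM
  unfold hdepth
  refine Nat.sSup_eq_and_sSup_mem_of_cofinal_subset ?_ ?_ ?_ ?_
  · obtain ⟨r, a, b, hP⟩ :=
      exists_isHilbertPartition hg hM.1 hcap (finiteDimensional_gr gr hsmul)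
    exact ⟨_, r, a, b, hP, rfl⟩
  · refine ⟨n, ?_⟩
    rintro _ ⟨k, Z, s, -, rfl⟩
    exact (Finset.inf'_le _ (Finset.mem_univ 0)).trans (card_finset_fin_le (Z 0))
  · rintro _ ⟨r, a, b, hP, rfl⟩
    obtain ⟨k, Z, s, hD, hdepth⟩ := hP.exists_isHilbertDecomp hM.1 hcap
    exact ⟨k, Z, s, hD, hdepth.symm⟩
  · rintro _ ⟨k, Z, s, hD, rfl⟩
    obtain ⟨r, a, b, hP, hle⟩ := hD.exists_isHilbertPartition hg hM.1 hcap
    exact ⟨_, ⟨r, a, b, hP, rfl⟩, hle⟩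
end

section
/- Let M be a finitely generated ℤⁿ-graded R-module that is positively g-determined, let m ∈ M_a be homogeneous with a ⪯ g, and let Z be a subset of the variables with Ann(m) ∩ K[Z] = 0 (so mK[Z] is a Stanley space). Define b(a) ∈ ℕⁿ by b(a)_j = a_j if X_j ∉ Z and b(a)_j = g_j if X_j ∈ Z. Then Ann(m) ∩ K[Z_{b(a)}] = 0, where Z_{b(a)} = {X_j : b(a)_j = g_j}. -/
open MvPolynomial

/-!  Setting: `R = K[X₁,…,Xₙ]` with the `ℤⁿ`-grading `deg Xᵢ = eᵢ`.  A multigraded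
`R`-module is a module `M` over `MvPolynomial (Fin n) K` together with a family
`gr : (Fin n → ℤ) → Submodule K M` of `K`-subspaces forming a direct sum
decomposition of `M` (the class `DirectSum.Decomposition gr`) which is compatible
with the `R`-action (`GradedSMul gr`). -/

variable {K : Type*} [Field K] {n : ℕ} {M : Type*} [AddCommGroup M] [Module K M]
  [Module (MvPolynomial (Fin n) K) M] [IsScalarTower K (MvPolynomial (Fin n) K) M]

/-! Since `m` is homogeneous and `R` acts compatibly with the grading, `q • m = 0` forces
`c_u X^u • m = 0` for every term of `q`. Split `X^u = X^{u₂} X^{u₁}` with `u₁` supported on `Z`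
and `u₂` off `Z`. A variable `X_j` of `q` outside `Z` lies in `Z_{b(a)}` only if `a_j = g_j`, so
multiplication by `X^{u₂}` is injective on `M_{a+u₁}` by `g`-determinedness. Hence
`c_u X^{u₁} • m = 0`, and `Ann(m) ∩ K[Z] = 0` gives `c_u = 0`. -/

theorem MvPolynomial.C_smul_eq_smul {σ R N : Type*} [CommSemiring R] [AddCommMonoid N]
    [Module R N] [Module (MvPolynomial σ R) N] [IsScalarTower R (MvPolynomial σ R) N]
    (c : R) (x : N) : (C c : MvPolynomial σ R) • x = c • x :=
  algebraMap_smul (MvPolynomial σ R) c x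

namespace GradedSMul

variable {gr : (Fin n → ℤ) → Submodule K M}

omit [IsScalarTower K (MvPolynomial (Fin n) K) M] in
theorem X_pow_smul_mem (hsmul : GradedSMul gr) (j : Fin n) (b : ℕ) {d : Fin n → ℤ} {x : M}
    (hx : x ∈ gr d) : (X j : MvPolynomial (Fin n) K) ^ b • x ∈ gr (d + Pi.single j (b : ℤ)) := by
  induction b with
  | zero => simpa using hx
  | succ b ih =>
    have hdeg : d + Pi.single j ((b + 1 : ℕ) : ℤ) = d + Pi.single j (b : ℤ) + Pi.single j 1 := by
      rw [add_assoc, ← Pi.single_add]; push_cast; rfl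
    rw [pow_succ', mul_smul, hdeg]
    exact hsmul j _ _ ih

theorem monomial_smul_mem (hsmul : GradedSMul gr) (u : Fin n →₀ ℕ) (c : K) {d : Fin n → ℤ}
    {x : M} (hx : x ∈ gr d) : monomial u c • x ∈ gr (d + fun l => (u l : ℤ)) := by
  induction u using Finsupp.induction_linear generalizing c d x with
  | zero => simpa [C_smul_eq_smul, ← Pi.zero_def] using (gr d).smul_mem c hx
  | add u v hu hv =>
    have hdeg : d + (fun l => ((u + v) l : ℤ)) = (d + fun l => (v l : ℤ)) + fun l => (u l : ℤ) := by
      funext l; simp only [Pi.add_apply, Finsupp.add_apply]; push_cast; ring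
    rw [← mul_one c, ← monomial_mul, mul_smul, hdeg]
    exact hu c (hv 1 hx)
  | single j b =>
    have hdeg : (fun l => ((Finsupp.single j b) l : ℤ)) = Pi.single j (b : ℤ) := by
      funext l; rw [Finsupp.single_apply, Pi.single_apply]; split_ifs <;> simp_all [eq_comm]
    have hmon : monomial (Finsupp.single j b) c = X j ^ b * C c := by
      rw [← monomial_zero', ← monomial_single_add, add_zero]
    rw [hmon, mul_smul, C_smul_eq_smul, hdeg]
    exact hsmul.X_pow_smul_mem j b ((gr d).smul_mem c hx)

theorem monomial_coeff_smul_eq_zero [DirectSum.Decomposition gr] (hsmul : GradedSMul gr)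
    {a : Fin n → ℤ} {m : M} (hm : m ∈ gr a) {q : MvPolynomial (Fin n) K} (hq : q • m = 0)
    (u : Fin n →₀ ℕ) :
    monomial u (coeff u q) • m = 0 := by
  classical
  have hshift : Function.Injective fun v : Fin n →₀ ℕ => a + fun l => (v l : ℤ) := by
    intro v w h
    ext l
    simpa using congr_fun h l
  have hindep : iSupIndep (gr ∘ fun v : Fin n →₀ ℕ => a + fun l => (v l : ℤ)) :=
    (DirectSum.Decomposition.isInternal gr).submodule_iSupIndep.comp hshift
  by_cases hu : u ∈ q.support
  · refine (iSupIndep_iff_finsetSum_eq_zero_imp_eq_zero _).1 hindep q.support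
      (fun v => monomial v (coeff v q) • m) (fun v _ => hsmul.monomial_smul_mem v _ hm) ?_ u hu
    rw [← Finset.sum_smul, ← q.as_sum, hq]
  · simp [notMem_support_iff.1 hu]

end GradedSMul

namespace PosDetermined

variable {gr : (Fin n → ℤ) → Submodule K M} {g : Fin n → ℤ}

omit [IsScalarTower K (MvPolynomial (Fin n) K) M] in
theorem eq_zero_of_X_pow_smul_eq_zero (hM : PosDetermined gr g) (hsmul : GradedSMul gr)
    {j : Fin n} (b : ℕ) {d : Fin n → ℤ} {x : M} (hx : x ∈ gr d) (hj : g j ≤ d j)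
    (h : (X j : MvPolynomial (Fin n) K) ^ b • x = 0) : x = 0 := by
  induction b generalizing d x with
  | zero => simpa using h
  | succ b ih =>
    rw [pow_succ, mul_smul] at h
    have hXx : (X j : MvPolynomial (Fin n) K) • x = 0 :=
      ih (hsmul j d x hx) (by simp only [Pi.add_apply, Pi.single_eq_same]; omega) h
    exact (hM.2 j d hj).1 x hx hXx

theorem eq_zero_of_monomial_smul_eq_zero (hM : PosDetermined gr g) (hsmul : GradedSMul gr)
    (v : Fin n →₀ ℕ) {d : Fin n → ℤ} {x : M} (hx : x ∈ gr d) (hv : ∀ j, v j ≠ 0 → g j ≤ d j)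
    (h : monomial v (1 : K) • x = 0) : x = 0 := by
  induction v using Finsupp.induction_linear generalizing d x with
  | zero => simpa using h
  | add u v hu hv' =>
    rw [← mul_one (1 : K), ← monomial_mul, mul_smul] at h
    have hvx : monomial v (1 : K) • x = 0 := by
      refine hu (hsmul.monomial_smul_mem v 1 hx) (fun j hj => ?_) h
      have := hv j (by simp only [Finsupp.add_apply]; omega)
      simp only [Pi.add_apply]
      omega
    exact hv' hx (fun j hj => hv j (by simp only [Finsupp.add_apply]; omega)) hvx
  | single j b =>
    rcases eq_or_ne b 0 with rfl | hb
    · simpa using h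
    · rw [← X_pow_eq_monomial] at h
      exact hM.eq_zero_of_X_pow_smul_eq_zero hsmul b hx (hv j (by simpa using hb)) h

end PosDetermined

theorem ann_inter_enlarged_subalgebra_eq_bot_general
    (gr : (Fin n → ℤ) → Submodule K M) [DirectSum.Decomposition gr]
    (hsmul : GradedSMul gr)
    (g : Fin n → ℤ)
    (hM : PosDetermined gr g)
    (a : Fin n → ℤ)
    (m : M) (hmem : m ∈ gr a) (Z : Finset (Fin n))
    (hann : ∀ q ∈ MvPolynomial.supported K (↑Z : Set (Fin n)), q • m = 0 → q = 0) :
    ∀ q ∈ MvPolynomial.supported K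
        (↑(Finset.univ.filter fun j => (if j ∈ Z then g j else a j) = g j) : Set (Fin n)),
      q • m = 0 → q = 0 := by
  classical
  intro q hq hqm
  ext u
  rw [coeff_zero]
  by_contra hc
  set u₁ := u.filter (· ∈ Z)
  set u₂ := u.filter (· ∉ Z)
  have hstable : ∀ j, u₂ j ≠ 0 → g j ≤ (a + fun l => (u₁ l : ℤ)) j := by
    intro j hj
    have hjZ : j ∉ Z := by by_contra h; simp [u₂, h] at hj
    have hjq : j ∈ q.vars :=
      (mem_vars_iff_mem_support j).2 ⟨u, mem_support_iff.2 hc, by simpa [u₂, hjZ] using hj⟩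
    have hag : a j = g j := by simpa [hjZ] using mem_supported.1 hq hjq
    have hu₁ : u₁ j = 0 := Finsupp.filter_apply_neg _ _ hjZ
    simp [hu₁, hag]
  have hzero : monomial u₁ (coeff u q) • m = 0 := by
    refine hM.eq_zero_of_monomial_smul_eq_zero hsmul u₂
      (hsmul.monomial_smul_mem u₁ (coeff u q) hmem) hstable ?_
    rw [← mul_smul, monomial_mul, one_mul, add_comm, Finsupp.filter_add_filter_not]
    exact hsmul.monomial_coeff_smul_eq_zero hmem hqm u
  have hZ : monomial u₁ (coeff u q) ∈ supported K (↑Z : Set (Fin n)) := by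
    rw [mem_supported, vars_monomial hc, Finsupp.support_filter]
    exact fun j hj => (Finset.mem_filter.1 hj).2
  exact hc (monomial_eq_zero.1 (hann _ hZ hzero))

/-- If `M` is a finitely generated multigraded `R`-module, positively
`g`-determined, `m ∈ M_a` with `a ⪯ g`, and `mK[Z]` is a Stanley space
(`Ann(m) ∩ K[Z] = 0`), then with `b(a)_j = g_j` for `X_j ∈ Z` and `b(a)_j = a_j`
otherwise, one also has `Ann(m) ∩ K[Z_{b(a)}] = 0`, where
`Z_{b(a)} = {j : b(a)_j = g_j}`. -/
theorem ann_inter_enlarged_subalgebra_eq_bot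
    (gr : (Fin n → ℤ) → Submodule K M) [DirectSum.Decomposition gr]
    (hsmul : GradedSMul gr) [Module.Finite (MvPolynomial (Fin n) K) M]
    (g : Fin n → ℤ) (hg : (0 : Fin n → ℤ) ≤ g)
    (hM : PosDetermined gr g)
    (a : Fin n → ℤ) (ha : (0 : Fin n → ℤ) ≤ a) (hag : a ≤ g)
    (m : M) (hmem : m ∈ gr a) (Z : Finset (Fin n))
    (hann : ∀ q ∈ MvPolynomial.supported K (↑Z : Set (Fin n)), q • m = 0 → q = 0) :
    ∀ q ∈ MvPolynomial.supported K
        (↑(Finset.univ.filter fun j => (if j ∈ Z then g j else a j) = g j) : Set (Fin n)),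
      q • m = 0 → q = 0 :=
  ann_inter_enlarged_subalgebra_eq_bot_general gr hsmul g hM a m hmem Z hann
end
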